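/- Let G be a weighted directed graph on vertex set V = {1,…,n} and let M_coll be the collider motif with vertices {1,2,3}, edges E_M = {(1,2),(3,2)}, and anchor set A = {1,3}. Then the functional motif adjacency matrix of M_coll in G satisfies M^func = (1/2)·(C + Cᵀ), where C = J_n ∘ (J Gᵀ); equivalently, M^func = (1/2)·J_n ∘ (J Gᵀ + G Jᵀ). -/

import Mathlib

open scoped Classical BigOperators Matrix

noncomputable section

/-- A motif on `m` vertices: a weakly connected loopless directed graph on the vertex set
`Fin m`, given by its edge set. -/
structure Motif (m : ℕ) where
  edges : Finset (Fin m × Fin m)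
  irrefl : ∀ e ∈ edges, e.1 ≠ e.2
  connected : (SimpleGraph.fromRel (fun u v => (u, v) ∈ edges)).Connected

variable {n m : ℕ}

/-- Edge set of the weighted directed graph with weight matrix `G`:
`E = {(i,j) : i ≠ j and G i j > 0}`. -/
def edgeFinset (G : Matrix (Fin n) (Fin n) ℝ) : Finset (Fin n × Fin n) :=
  Finset.univ.filter fun p => p.1 ≠ p.2 ∧ 0 < G p.1 p.2

/-- Directed-edge indicator matrix `J`. -/
def Jmat (G : Matrix (Fin n) (Fin n) ℝ) : Matrix (Fin n) (Fin n) ℝ :=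
  fun i j => if (i, j) ∈ edgeFinset G then 1 else 0

/-- Single-edge indicator matrix `J_s`. -/
def Jsmat (G : Matrix (Fin n) (Fin n) ℝ) : Matrix (Fin n) (Fin n) ℝ :=
  fun i j => if (i, j) ∈ edgeFinset G ∧ (j, i) ∉ edgeFinset G then 1 else 0

/-- Double-edge indicator matrix `J_d`. -/
def Jdmat (G : Matrix (Fin n) (Fin n) ℝ) : Matrix (Fin n) (Fin n) ℝ :=
  fun i j => if (i, j) ∈ edgeFinset G ∧ (j, i) ∈ edgeFinset G then 1 else 0

/-- Missing-edge indicator matrix `J_0`. -/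
def J0mat (G : Matrix (Fin n) (Fin n) ℝ) : Matrix (Fin n) (Fin n) ℝ :=
  fun i j => if (i, j) ∉ edgeFinset G ∧ (j, i) ∉ edgeFinset G ∧ i ≠ j then 1 else 0

/-- Vertex-distinct indicator matrix `J_n`. -/
def Jnmat (n : ℕ) : Matrix (Fin n) (Fin n) ℝ :=
  fun i j => if i ≠ j then 1 else 0

/-- Single-edge weighted matrix `G_s`. -/
def Gsmat (G : Matrix (Fin n) (Fin n) ℝ) : Matrix (Fin n) (Fin n) ℝ :=
  fun i j => if (i, j) ∈ edgeFinset G ∧ (j, i) ∉ edgeFinset G then G i j else 0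

/-- Double-edge weighted matrix `G_d`. -/
def Gdmat (G : Matrix (Fin n) (Fin n) ℝ) : Matrix (Fin n) (Fin n) ℝ :=
  fun i j => if (i, j) ∈ edgeFinset G ∧ (j, i) ∈ edgeFinset G then G i j + G j i else 0

/-- Entrywise (Hadamard) product of matrices. -/
def had (A B : Matrix (Fin n) (Fin n) ℝ) : Matrix (Fin n) (Fin n) ℝ :=
  fun i j => A i j * B i j

/-- Well-formedness of a candidate subgraph `H = (V_H, E_H)` of a graph on `Fin n`:
each edge joins two distinct vertices of `H`. -/
def IsGraphPair (H : Finset (Fin n) × Finset (Fin n × Fin n)) : Prop :=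
  ∀ e ∈ H.2, e.1 ∈ H.1 ∧ e.2 ∈ H.1 ∧ e.1 ≠ e.2

/-- `φ` is an isomorphism from the motif `M` onto the graph `H = (V_H, E_H)`. -/
def IsIso (M : Motif m) (H : Finset (Fin n) × Finset (Fin n × Fin n))
    (φ : Fin m → Fin n) : Prop :=
  Function.Injective φ ∧ Finset.image φ Finset.univ = H.1 ∧
    ∀ u v : Fin m, (u, v) ∈ M.edges ↔ (φ u, φ v) ∈ H.2

/-- `H` is a functional instance of motif `M` in the graph with weight matrix `G`,
i.e. `M ≅ H ≤ G`. -/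
def IsFuncInstance (M : Motif m) (G : Matrix (Fin n) (Fin n) ℝ)
    (H : Finset (Fin n) × Finset (Fin n × Fin n)) : Prop :=
  IsGraphPair H ∧ H.2 ⊆ edgeFinset G ∧ ∃ φ, IsIso M H φ

/-- `H` is a structural instance of motif `M` in the graph with weight matrix `G`,
i.e. `M ≅ H < G` (`H` an induced subgraph: `E_H = E ∩ (V_H × V_H)`). -/
def IsStrucInstance (M : Motif m) (G : Matrix (Fin n) (Fin n) ℝ)
    (H : Finset (Fin n) × Finset (Fin n × Fin n)) : Prop :=
  IsGraphPair H ∧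
    H.2 = (edgeFinset G).filter (fun e => e.1 ∈ H.1 ∧ e.2 ∈ H.1) ∧
    ∃ φ, IsIso M H φ

/-- `{i, j}` is an anchored pair of the instance `H`: there is an isomorphism `φ` from
`M` to `H` and distinct anchors `a, b ∈ A` with `φ a = i` and `φ b = j`. -/
def AnchoredPair (M : Motif m) (A : Finset (Fin m))
    (H : Finset (Fin n) × Finset (Fin n × Fin n)) (i j : Fin n) : Prop :=
  ∃ φ, IsIso M H φ ∧ ∃ a ∈ A, ∃ b ∈ A, a ≠ b ∧ φ a = i ∧ φ b = j

/-- The functional motif adjacency matrix of the motif `(M, A)` in the graph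
with weight matrix `G`. -/
def mamFunc (M : Motif m) (A : Finset (Fin m)) (G : Matrix (Fin n) (Fin n) ℝ) :
    Matrix (Fin n) (Fin n) ℝ :=
  fun i j => (1 / (M.edges.card : ℝ)) *
    ∑ H : Finset (Fin n) × Finset (Fin n × Fin n),
      if IsFuncInstance M G H ∧ AnchoredPair M A H i j then ∑ e ∈ H.2, G e.1 e.2 else 0

/-- The structural motif adjacency matrix of the motif `(M, A)` in the graph
with weight matrix `G`. -/
def mamStruc (M : Motif m) (A : Finset (Fin m)) (G : Matrix (Fin n) (Fin n) ℝ) :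
    Matrix (Fin n) (Fin n) ℝ :=
  fun i j => (1 / (M.edges.card : ℝ)) *
    ∑ H : Finset (Fin n) × Finset (Fin n × Fin n),
      if IsStrucInstance M G H ∧ AnchoredPair M A H i j then ∑ e ∈ H.2, G e.1 e.2 else 0

/-!
An isomorphism `φ` from the collider onto a subgraph `H` determines `H` completely: `H` is the
collider `φ 0 → φ 1 ← φ 2`. Hence the functional instances anchored at `(i, k)` correspond
bijectively to the common out-neighbours `j` of `i ≠ k`, each instance having weight
`G i j + G k j`. As `G` vanishes off the edge set, that weight is `J i j G k j + J k j G i j`, and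
summing over `j` gives `(J Gᵀ) i k + (J Gᵀ) k i`.
-/

lemma mem_edgeFinset {G : Matrix (Fin n) (Fin n) ℝ} {i j : Fin n} :
    (i, j) ∈ edgeFinset G ↔ i ≠ j ∧ 0 < G i j := by
  simp [edgeFinset]

lemma eq_zero_of_not_mem_edgeFinset {G : Matrix (Fin n) (Fin n) ℝ}
    (hpos : ∀ i j, 0 ≤ G i j) (hdiag : ∀ i, G i i = 0) {i j : Fin n}
    (h : (i, j) ∉ edgeFinset G) : G i j = 0 := by
  rcases eq_or_ne i j with rfl | hij
  · exact hdiag i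
  · exact ((hpos i j).eq_or_lt.resolve_right fun hlt => h (mem_edgeFinset.mpr ⟨hij, hlt⟩)).symm

lemma ite_mem_edgeFinset_eq_Jmat_mul {G : Matrix (Fin n) (Fin n) ℝ}
    (hpos : ∀ i j, 0 ≤ G i j) (hdiag : ∀ i, G i i = 0) (a b c : Fin n) :
    (if (a, c) ∈ edgeFinset G ∧ (b, c) ∈ edgeFinset G then G a c + G b c else 0) =
      Jmat G a c * G b c + Jmat G b c * G a c := by
  by_cases hac : (a, c) ∈ edgeFinset G <;> by_cases hbc : (b, c) ∈ edgeFinset G <;>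
    simp [Jmat, hac, hbc, eq_zero_of_not_mem_edgeFinset hpos hdiag, add_comm]

lemma had_add_transpose {S : Matrix (Fin n) (Fin n) ℝ} (hS : Sᵀ = S)
    (X : Matrix (Fin n) (Fin n) ℝ) : had S X + (had S X)ᵀ = had S (X + Xᵀ) := by
  ext i j
  have hSij : S j i = S i j := congrFun (congrFun hS i) j
  simp only [had, Matrix.add_apply, Matrix.transpose_apply, hSij, mul_add]

lemma Jnmat_transpose : (Jnmat n)ᵀ = Jnmat n := by
  ext i j
  simp only [Jnmat, Matrix.transpose_apply, ne_comm]

namespace Motif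

def map (M : Motif m) (φ : Fin m → Fin n) : Finset (Fin n) × Finset (Fin n × Fin n) :=
  (Finset.univ.image φ, M.edges.image (Prod.map φ φ))

lemma isIso_map (M : Motif m) {φ : Fin m → Fin n} (hφ : Function.Injective φ) :
    IsIso M (M.map φ) φ :=
  ⟨hφ, rfl, fun u v => ((hφ.prodMap hφ).mem_finset_image (a := (u, v))).symm⟩

lemma eq_map_of_isIso {M : Motif m} {H : Finset (Fin n) × Finset (Fin n × Fin n)}
    {φ : Fin m → Fin n} (hH : IsGraphPair H) (hφ : IsIso M H φ) : H = M.map φ := by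
  obtain ⟨-, himg, hedges⟩ := hφ
  refine Prod.ext himg.symm (Finset.ext fun ⟨x, y⟩ => ⟨fun hxy => ?_, fun hxy => ?_⟩)
  · obtain ⟨hx, hy, -⟩ := hH _ hxy
    rw [← himg, Finset.mem_image] at hx hy
    obtain ⟨u, -, rfl⟩ := hx
    obtain ⟨v, -, rfl⟩ := hy
    exact Finset.mem_image_of_mem _ ((hedges u v).mpr hxy)
  · obtain ⟨⟨u, v⟩, huv, he⟩ := Finset.mem_image.mp hxy
    obtain ⟨rfl, rfl⟩ := Prod.ext_iff.mp he
    exact (hedges u v).mp huv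

end Motif

def colliderInstance (i j k : Fin n) : Finset (Fin n) × Finset (Fin n × Fin n) :=
  ({i, j, k}, {(i, j), (k, j)})

lemma colliderInstance_comm (i j k : Fin n) : colliderInstance k j i = colliderInstance i j k := by
  simp only [colliderInstance, Prod.mk.injEq, Finset.pair_comm, and_true]
  ext x
  simp only [Finset.mem_insert, Finset.mem_singleton]
  tauto

lemma colliderInstance_injective (i k : Fin n) : Function.Injective (colliderInstance i · k) := by
  intro j j' h
  have hmem : (i, j) ∈ (colliderInstance i j' k).2 := by
    rw [← show colliderInstance i j k = colliderInstance i j' k from h]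
    exact Finset.mem_insert_self _ _
  simp only [colliderInstance, Finset.mem_insert, Finset.mem_singleton, Prod.mk.injEq] at hmem
  rcases hmem with ⟨-, rfl⟩ | ⟨-, rfl⟩ <;> rfl

section Collider

variable {M : Motif 3}

lemma Motif.map_eq_colliderInstance (hM : M.edges = {(0, 1), (2, 1)}) (φ : Fin 3 → Fin n) :
    M.map φ = colliderInstance (φ 0) (φ 1) (φ 2) := by
  have huniv : (Finset.univ : Finset (Fin 3)) = {0, 1, 2} := by decide
  simp [Motif.map, colliderInstance, hM, huniv]

lemma isIso_colliderInstance (hM : M.edges = {(0, 1), (2, 1)}) {i j k : Fin n}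
    (hij : i ≠ j) (hkj : k ≠ j) (hik : i ≠ k) : IsIso M (colliderInstance i j k) ![i, j, k] := by
  have hinj : Function.Injective ![i, j, k] := by
    intro u v h
    fin_cases u <;> fin_cases v <;> simp_all [eq_comm]
  have h := M.isIso_map hinj
  rwa [Motif.map_eq_colliderInstance hM] at h

lemma isFuncInstance_colliderInstance (hM : M.edges = {(0, 1), (2, 1)})
    {G : Matrix (Fin n) (Fin n) ℝ} {i j k : Fin n} (hik : i ≠ k)
    (hij : (i, j) ∈ edgeFinset G) (hkj : (k, j) ∈ edgeFinset G) :
    IsFuncInstance M G (colliderInstance i j k) := by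
  have hij' := (mem_edgeFinset.mp hij).1
  have hkj' := (mem_edgeFinset.mp hkj).1
  refine ⟨?_, ?_, _, isIso_colliderInstance hM hij' hkj' hik⟩
  · intro e he
    simp only [colliderInstance, Finset.mem_insert, Finset.mem_singleton] at he ⊢
    rcases he with rfl | rfl <;> simp [hij', hkj']
  · intro e he
    simp only [colliderInstance, Finset.mem_insert, Finset.mem_singleton] at he
    rcases he with rfl | rfl <;> assumption

lemma anchoredPair_colliderInstance (hM : M.edges = {(0, 1), (2, 1)}) {A : Finset (Fin 3)}
    (hA : A = {0, 2}) {i j k : Fin n} (hij : i ≠ j) (hkj : k ≠ j) (hik : i ≠ k) :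
    AnchoredPair M A (colliderInstance i j k) i k :=
  ⟨_, isIso_colliderInstance hM hij hkj hik, 0, by simp [hA], 2, by simp [hA], by decide, rfl, rfl⟩

lemma isFuncInstance_and_anchoredPair_iff (hM : M.edges = {(0, 1), (2, 1)})
    {A : Finset (Fin 3)} (hA : A = {0, 2}) {G : Matrix (Fin n) (Fin n) ℝ}
    {H : Finset (Fin n) × Finset (Fin n × Fin n)} {i k : Fin n} :
    IsFuncInstance M G H ∧ AnchoredPair M A H i k ↔
      ∃ j, (i ≠ k ∧ (i, j) ∈ edgeFinset G ∧ (k, j) ∈ edgeFinset G) ∧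
        colliderInstance i j k = H := by
  constructor
  · rintro ⟨⟨hH, hsub, -⟩, φ, hφ, a, ha, b, hb, hab, rfl, rfl⟩
    have hHφ := (Motif.eq_map_of_isIso hH hφ).trans (Motif.map_eq_colliderInstance hM φ)
    have h01 : (φ 0, φ 1) ∈ edgeFinset G := hsub (by simp [hHφ, colliderInstance])
    have h21 : (φ 2, φ 1) ∈ edgeFinset G := hsub (by simp [hHφ, colliderInstance])
    have hφab : φ a ≠ φ b := hφ.1.ne hab
    rw [hA, Finset.mem_insert, Finset.mem_singleton] at ha hb
    rcases ha with rfl | rfl <;> rcases hb with rfl | rfl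
    · exact absurd rfl hab
    · exact ⟨φ 1, ⟨hφab, h01, h21⟩, hHφ.symm⟩
    · exact ⟨φ 1, ⟨hφab, h21, h01⟩, (colliderInstance_comm _ _ _).trans hHφ.symm⟩
    · exact absurd rfl hab
  · rintro ⟨j, ⟨hik, hij, hkj⟩, rfl⟩
    exact ⟨isFuncInstance_colliderInstance hM hik hij hkj, anchoredPair_colliderInstance hM hA
      (mem_edgeFinset.mp hij).1 (mem_edgeFinset.mp hkj).1 hik⟩

lemma mamFunc_collider_apply (hM : M.edges = {(0, 1), (2, 1)}) {A : Finset (Fin 3)}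
    (hA : A = {0, 2}) (G : Matrix (Fin n) (Fin n) ℝ) (i k : Fin n) :
    mamFunc M A G i k = 1 / 2 * ∑ j,
      if i ≠ k ∧ (i, j) ∈ edgeFinset G ∧ (k, j) ∈ edgeFinset G then G i j + G k j else 0 := by
  have hcard : (M.edges.card : ℝ) = 2 := by rw [hM]; rfl
  have hinstances : Finset.univ.filter (fun H => IsFuncInstance M G H ∧ AnchoredPair M A H i k) =
      (Finset.univ.filter fun j => i ≠ k ∧ (i, j) ∈ edgeFinset G ∧ (k, j) ∈ edgeFinset G).image
        (colliderInstance i · k) := by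
    ext H
    simp [isFuncInstance_and_anchoredPair_iff hM hA]
  simp only [mamFunc, hcard]
  rw [← Finset.sum_filter, hinstances, Finset.sum_image (colliderInstance_injective i k).injOn,
    ← Finset.sum_filter]
  refine congrArg _ (Finset.sum_congr rfl fun j hj => Finset.sum_pair ?_)
  simpa using (Finset.mem_filter.mp hj).2.1

lemma mamFunc_collider (hM : M.edges = {(0, 1), (2, 1)}) {A : Finset (Fin 3)}
    (hA : A = {0, 2}) {G : Matrix (Fin n) (Fin n) ℝ}
    (hpos : ∀ i j, 0 ≤ G i j) (hdiag : ∀ i, G i i = 0) :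
    mamFunc M A G = (1 / 2 : ℝ) • had (Jnmat n) (Jmat G * Gᵀ + (Jmat G * Gᵀ)ᵀ) := by
  ext i k
  rw [mamFunc_collider_apply hM hA]
  simp only [Matrix.smul_apply, had, Jnmat, Matrix.add_apply, Matrix.transpose_apply,
    Matrix.mul_apply, smul_eq_mul]
  by_cases hik : i = k
  · simp [hik]
  · simp only [ne_eq, hik, not_false_eq_true, true_and, if_true, one_mul,
      ite_mem_edgeFinset_eq_Jmat_mul hpos hdiag, Finset.sum_add_distrib]

end Collider

/-- **Functional MAM formula for the collider motif.** -/
theorem mam_collider_func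
    (G : Matrix (Fin n) (Fin n) ℝ)
    (hpos : ∀ i j, 0 ≤ G i j) (hdiag : ∀ i, G i i = 0)
    (Mcoll : Motif 3) (hM : Mcoll.edges = {((0 : Fin 3), 1), (2, 1)})
    (A : Finset (Fin 3)) (hA : A = {0, 2}) :
    mamFunc Mcoll A G =
      (1 / 2 : ℝ) • (had (Jnmat n) (Jmat G * Gᵀ) + (had (Jnmat n) (Jmat G * Gᵀ))ᵀ) ∧
    mamFunc Mcoll A G =
      (1 / 2 : ℝ) • had (Jnmat n) (Jmat G * Gᵀ + G * (Jmat G)ᵀ) := by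
  have h := mamFunc_collider hM hA hpos hdiag
  refine ⟨?_, ?_⟩
  · rwa [had_add_transpose Jnmat_transpose]
  · rwa [Matrix.transpose_mul, Matrix.transpose_transpose] at h
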